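/- A ℂ-linear map D on a unital commutative associative ℂ-algebra V is a differential operator of order at most l if and only if for all f_1,…,f_{l+1} ∈ V one has D(f_1 f_2 ⋯ f_{l+1}) = Σ_{I ⊆ {1,…,l+1}, 1 ≤ |I| ≤ l} (−1)^{l−|I|} · D(f_I) · f_{{1,…,l+1}∖I}. -/
import Mathlib

open Finset

private def csEmb (n : ℕ) : Fin n ↪ Fin (n + 1) :=
  ⟨Fin.castSucc, Fin.castSucc_injective n⟩

@[simp] private lemma csEmb_apply (n : ℕ) (i : Fin n) : csEmb n i = i.castSucc := rfl

private lemma compl_map_eq {m : ℕ} (e : Fin m ↪ Fin (m + 1)) (x : Fin (m + 1))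
    (hx : ∀ y : Fin (m + 1), y ≠ x ↔ ∃ j, e j = y) (J : Finset (Fin m)) :
    (J.map e)ᶜ = insert x (Jᶜ.map e) := by
  ext y
  simp only [mem_compl, mem_map, mem_insert]
  constructor
  · intro h
    by_cases hy : y = x
    · exact Or.inl hy
    · obtain ⟨j, hj⟩ := (hx y).mp hy
      refine Or.inr ⟨j, fun hjJ => h ⟨j, hjJ, hj⟩, hj⟩
  · rintro (rfl | ⟨j, hj, rfl⟩)
    · rintro ⟨j, -, hj⟩
      exact ((hx y).mpr ⟨j, hj⟩) rfl
    · rintro ⟨j', hj', he⟩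
      exact hj (e.injective he ▸ hj')

private lemma sum_powerset_map {α β M : Type*} [AddCommMonoid M] [DecidableEq α] [DecidableEq β]
    (e : α ↪ β) (s : Finset α) (F : Finset β → M) :
    ∑ t ∈ (s.map e).powerset, F t = ∑ J ∈ s.powerset, F (J.map e) := by
  refine Finset.sum_nbij' (fun t => t.preimage e e.injective.injOn)
    (fun J => J.map e) ?_ ?_ ?_ ?_ ?_
  · intro t ht
    rw [mem_powerset] at ht ⊢
    intro j hj
    rw [Finset.mem_preimage] at hj
    obtain ⟨j', hj's, hj'⟩ := mem_map.mp (ht hj)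
    exact (e.injective hj') ▸ hj's
  · intro J hJ
    rw [mem_powerset] at hJ ⊢
    exact Finset.map_subset_map.mpr hJ
  · intro t ht
    rw [mem_powerset] at ht
    ext y
    simp only [mem_map, Finset.mem_preimage]
    constructor
    · rintro ⟨j, hj, rfl⟩; exact hj
    · intro hy
      obtain ⟨j, -, rfl⟩ := mem_map.mp (ht hy)
      exact ⟨j, hy, rfl⟩
  · intro J _
    ext j
    simp only [Finset.mem_preimage, Finset.mem_map']
  · intro t ht
    rw [mem_powerset] at ht
    congr 1
    ext y
    simp only [mem_map, Finset.mem_preimage]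
    constructor
    · intro hy
      obtain ⟨j, -, rfl⟩ := mem_map.mp (ht hy)
      exact ⟨j, hy, rfl⟩
    · rintro ⟨j, hj, rfl⟩; exact hj

private lemma sum_powerset_split {m : ℕ} {M : Type*} [AddCommMonoid M]
    (e : Fin m ↪ Fin (m + 1)) (x : Fin (m + 1))
    (hx : ∀ y : Fin (m + 1), y ≠ x ↔ ∃ j, e j = y)
    (F : Finset (Fin (m + 1)) → M) :
    ∑ I ∈ (univ : Finset (Fin (m + 1))).powerset, F I =
      ∑ J ∈ (univ : Finset (Fin m)).powerset, F (J.map e) +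
        ∑ J ∈ (univ : Finset (Fin m)).powerset, F (insert x (J.map e)) := by
  have hxm : x ∉ (univ : Finset (Fin m)).map e := by
    simp only [mem_map, mem_univ, true_and]
    rintro ⟨j, hj⟩
    exact ((hx x).mpr ⟨j, hj⟩) rfl
  have huniv : (univ : Finset (Fin (m + 1))) = insert x ((univ : Finset (Fin m)).map e) := by
    ext y
    simp only [mem_univ, true_iff, mem_insert, mem_map, mem_univ, true_and]
    by_cases hy : y = x
    · exact Or.inl hy
    · exact Or.inr ((hx y).mp hy)
  rw [huniv, Finset.sum_powerset_insert hxm, sum_powerset_map, sum_powerset_map]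



/-- The Koszul bracket hierarchy of an operator `D` on a commutative algebra:
`⟨f⟩₁ = D f` and
`⟨f₁,…,f_{l+1}⟩_{l+1} = ⟨f₁,…,f_{l-1},f_l·f_{l+1}⟩_l − ⟨f₁,…,f_l⟩_l·f_{l+1} − f_l·⟨f₁,…,f_{l-1},f_{l+1}⟩_l`. -/
def koszul {V : Type*} [CommRing V] (D : V → V) : (l : ℕ) → (Fin l → V) → V
  | 0, _ => 0
  | 1, f => D (f 0)
  | l + 2, f =>
      koszul D (l + 1)
        (Fin.snoc (fun i : Fin l => f i.castSucc.castSucc)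
          (f ⟨l, by omega⟩ * f ⟨l + 1, by omega⟩))
      - koszul D (l + 1) (fun i => f i.castSucc) * f ⟨l + 1, by omega⟩
      - f ⟨l, by omega⟩ *
          koszul D (l + 1)
            (Fin.snoc (fun i : Fin l => f i.castSucc.castSucc) (f ⟨l + 1, by omega⟩))

/-- `D` is a differential operator of order at most `l` if the `(l+1)`-st Koszul
bracket vanishes identically. -/
def IsDiffOpOfOrderAtMost {V : Type*} [CommRing V] (D : V → V) (l : ℕ) : Prop :=
  ∀ f : Fin (l + 1) → V, koszul D (l + 1) f = 0

private lemma koszul_closed {V : Type*} [CommRing V] (D : V → V) :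
    ∀ (n : ℕ) (f : Fin (n + 1) → V),
      koszul D (n + 1) f =
        ∑ I ∈ (univ : Finset (Fin (n + 1))).powerset.filter Finset.Nonempty,
          (-1 : V) ^ (n + 1 - I.card) * D (∏ i ∈ I, f i) * ∏ i ∈ Iᶜ, f i
  | 0, f => by
    have h : (univ : Finset (Fin 1)).powerset.filter Finset.Nonempty = {{0}} := by decide
    rw [h, sum_singleton]
    have h2 : ({0} : Finset (Fin 1))ᶜ = ∅ := by decide
    simp [koszul, h2]
  | n + 1, g => by
    have IH := koszul_closed D n
    -- notation
    have hx1 : ∀ y : Fin (n + 1), y ≠ Fin.last n ↔ ∃ j, csEmb n j = y := by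
      intro y
      constructor
      · intro h
        obtain ⟨j, hj⟩ := Fin.exists_castSucc_eq.mpr h
        exact ⟨j, hj⟩
      · rintro ⟨j, rfl⟩
        exact (Fin.castSucc_lt_last j).ne
    have hx2 : ∀ y : Fin (n + 2), y ≠ Fin.last (n + 1) ↔ ∃ j, csEmb (n + 1) j = y := by
      intro y
      constructor
      · intro h
        obtain ⟨j, hj⟩ := Fin.exists_castSucc_eq.mpr h
        exact ⟨j, hj⟩
      · rintro ⟨j, rfl⟩
        exact (Fin.castSucc_lt_last j).ne
    have hnm1 : ∀ K : Finset (Fin n), Fin.last n ∉ K.map (csEmb n) := by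
      intro K h
      obtain ⟨j, -, hj⟩ := mem_map.mp h
      exact ((hx1 (Fin.last n)).mpr ⟨j, hj⟩) rfl
    have hnL : ∀ J : Finset (Fin (n + 1)), Fin.last (n + 1) ∉ J.map (csEmb (n + 1)) := by
      intro J h
      obtain ⟨j, -, hj⟩ := mem_map.mp h
      exact ((hx2 (Fin.last (n + 1))).mpr ⟨j, hj⟩) rfl
    have hmM : ∀ S : Finset (Fin n),
        (Fin.last n).castSucc ∉ (S.map (csEmb n)).map (csEmb (n + 1)) := by
      intro S h
      simp only [mem_map, csEmb_apply] at h
      obtain ⟨j, ⟨k, -, hk⟩, hj⟩ := h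
      subst hk
      have := congrArg Fin.val hj
      simp [Fin.last] at this
      omega
    have c1 : ∀ K : Finset (Fin n),
        (K.map (csEmb n))ᶜ = insert (Fin.last n) (Kᶜ.map (csEmb n)) :=
      compl_map_eq (csEmb n) (Fin.last n) hx1
    have c2 : ∀ J : Finset (Fin (n + 1)),
        (J.map (csEmb (n + 1)))ᶜ = insert (Fin.last (n + 1)) (Jᶜ.map (csEmb (n + 1))) :=
      compl_map_eq (csEmb (n + 1)) (Fin.last (n + 1)) hx2
    have p1 : ∀ (K : Finset (Fin n)) (h : Fin (n + 1) → V),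
        ∏ i ∈ K.map (csEmb n), h i = ∏ k ∈ K, h k.castSucc := by
      intro K h
      rw [Finset.prod_map]
      simp
    have p2 : ∀ (J : Finset (Fin (n + 1))) (h : Fin (n + 2) → V),
        ∏ i ∈ J.map (csEmb (n + 1)), h i = ∏ j ∈ J, h j.castSucc := by
      intro J h
      rw [Finset.prod_map]
      simp
    have psnoc : ∀ (z : V) (K : Finset (Fin n)),
        ∏ i ∈ K.map (csEmb n),
          Fin.snoc (fun i : Fin n => g i.castSucc.castSucc) z i
          = ∏ k ∈ K, g k.castSucc.castSucc := by
      intro z K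
      rw [p1]
      exact Finset.prod_congr rfl fun k _ => by rw [Fin.snoc_castSucc]
    have pins : ∀ (z : V) (K : Finset (Fin n)),
        ∏ i ∈ insert (Fin.last n) (K.map (csEmb n)),
          Fin.snoc (fun i : Fin n => g i.castSucc.castSucc) z i
          = z * ∏ k ∈ K, g k.castSucc.castSucc := by
      intro z K
      rw [Finset.prod_insert (hnm1 K), Fin.snoc_last, psnoc]
    have cins : ∀ K : Finset (Fin n),
        (insert (Fin.last n) (K.map (csEmb n)))ᶜ = Kᶜ.map (csEmb n) := by
      intro K
      rw [Finset.compl_insert, c1, Finset.erase_insert (hnm1 Kᶜ)]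
    have cinsL : ∀ J : Finset (Fin (n + 1)),
        (insert (Fin.last (n + 1)) (J.map (csEmb (n + 1))))ᶜ = Jᶜ.map (csEmb (n + 1)) := by
      intro J
      rw [Finset.compl_insert, c2, Finset.erase_insert (hnL Jᶜ)]
    have cardK : ∀ K : Finset (Fin n), K.card ≤ n := by
      intro K
      simpa using Finset.card_le_univ K
    have cardJ : ∀ J : Finset (Fin (n + 1)), J.card ≤ n + 1 := by
      intro J
      simpa using Finset.card_le_univ J
    -- unfold one step of the recursion
    have unfold : koszul D (n + 1 + 1) g =
        koszul D (n + 1)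
          (Fin.snoc (fun i : Fin n => g i.castSucc.castSucc)
            (g (Fin.last n).castSucc * g (Fin.last (n + 1))))
        - koszul D (n + 1) (fun i => g i.castSucc) * g (Fin.last (n + 1))
        - g (Fin.last n).castSucc *
            koszul D (n + 1)
              (Fin.snoc (fun i : Fin n => g i.castSucc.castSucc) (g (Fin.last (n + 1)))) := rfl
    rw [unfold]
    rw [IH, IH, IH]
    simp only [Finset.sum_filter]
    rw [sum_powerset_split (csEmb (n + 1)) (Fin.last (n + 1)) hx2
      (fun I => if I.Nonempty then
        (-1 : V) ^ (n + 1 + 1 - I.card) * D (∏ i ∈ I, g i) * ∏ i ∈ Iᶜ, g i else 0)]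
    -- split the A sum (first summand of LHS)
    conv_lhs => lhs; lhs; rw [sum_powerset_split (csEmb n) (Fin.last n) hx1]
    -- split the C sum (gM * C, last summand of LHS)
    conv_lhs => rhs; rw [sum_powerset_split (csEmb n) (Fin.last n) hx1]
    -- split the second chunk of RHS
    conv_rhs => rhs; rw [sum_powerset_split (csEmb n) (Fin.last n) hx1]
    -- termwise identities
    have key1 : ∀ K : Finset (Fin n),
        (if (Finset.map (csEmb n) K).Nonempty then
            (-1 : V) ^ (n + 1 - (Finset.map (csEmb n) K).card) *
                D (∏ i ∈ Finset.map (csEmb n) K,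
                    (Fin.snoc (fun i : Fin n => g i.castSucc.castSucc)
                      (g (Fin.last n).castSucc * g (Fin.last (n + 1))) : Fin (n+1) → V) i) *
              ∏ i ∈ (Finset.map (csEmb n) K)ᶜ,
                (Fin.snoc (fun i : Fin n => g i.castSucc.castSucc)
                  (g (Fin.last n).castSucc * g (Fin.last (n + 1))) : Fin (n+1) → V) i
          else 0)
        = g (Fin.last n).castSucc *
          (if (Finset.map (csEmb n) K).Nonempty then
            (-1 : V) ^ (n + 1 - (Finset.map (csEmb n) K).card) *
                D (∏ i ∈ Finset.map (csEmb n) K,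
                    (Fin.snoc (fun i : Fin n => g i.castSucc.castSucc) (g (Fin.last (n + 1))) : Fin (n+1) → V) i) *
              ∏ i ∈ (Finset.map (csEmb n) K)ᶜ,
                (Fin.snoc (fun i : Fin n => g i.castSucc.castSucc) (g (Fin.last (n + 1))) : Fin (n+1) → V) i
          else 0) := by
      intro K
      by_cases h : (Finset.map (csEmb n) K).Nonempty
      · rw [if_pos h, if_pos h, psnoc, psnoc, c1, Finset.prod_insert (hnm1 Kᶜ),
          Finset.prod_insert (hnm1 Kᶜ), Fin.snoc_last, Fin.snoc_last, psnoc, psnoc]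
        ring
      · rw [if_neg h, if_neg h, mul_zero]
    have key2 : ∀ K : Finset (Fin n),
        (if (insert (Fin.last n) (Finset.map (csEmb n) K)).Nonempty then
            (-1 : V) ^ (n + 1 - (insert (Fin.last n) (Finset.map (csEmb n) K)).card) *
                D (∏ i ∈ insert (Fin.last n) (Finset.map (csEmb n) K),
                    (Fin.snoc (fun i : Fin n => g i.castSucc.castSucc)
                      (g (Fin.last n).castSucc * g (Fin.last (n + 1))) : Fin (n+1) → V) i) *
              ∏ i ∈ (insert (Fin.last n) (Finset.map (csEmb n) K))ᶜ,
                (Fin.snoc (fun i : Fin n => g i.castSucc.castSucc)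
                  (g (Fin.last n).castSucc * g (Fin.last (n + 1))) : Fin (n+1) → V) i
          else 0)
        = (if (insert (Fin.last (n + 1))
              (Finset.map (csEmb (n + 1)) (insert (Fin.last n) (Finset.map (csEmb n) K)))).Nonempty then
            (-1 : V) ^ (n + 1 + 1 - (insert (Fin.last (n + 1))
                (Finset.map (csEmb (n + 1)) (insert (Fin.last n) (Finset.map (csEmb n) K)))).card) *
                D (∏ i ∈ insert (Fin.last (n + 1))
                    (Finset.map (csEmb (n + 1)) (insert (Fin.last n) (Finset.map (csEmb n) K))), g i) *
              ∏ i ∈ (insert (Fin.last (n + 1))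
                  (Finset.map (csEmb (n + 1)) (insert (Fin.last n) (Finset.map (csEmb n) K))))ᶜ, g i
          else 0) := by
      intro K
      rw [if_pos (Finset.insert_nonempty _ _), if_pos (Finset.insert_nonempty _ _)]
      have hc1 : (insert (Fin.last n) (Finset.map (csEmb n) K)).card = K.card + 1 := by
        rw [Finset.card_insert_of_notMem (hnm1 K), Finset.card_map]
      have hc2 : (insert (Fin.last (n + 1))
          (Finset.map (csEmb (n + 1)) (insert (Fin.last n) (Finset.map (csEmb n) K)))).card
          = K.card + 2 := by
        rw [Finset.card_insert_of_notMem (hnL _), Finset.card_map, hc1]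
      rw [hc1, hc2, show n + 1 - (K.card + 1) = n - K.card from by omega,
        show n + 1 + 1 - (K.card + 2) = n - K.card from by omega]
      -- LHS products
      rw [pins, cins, psnoc]
      -- RHS products
      rw [Finset.prod_insert (hnL _), p2, Finset.prod_insert (hnm1 K), p1]
      rw [cinsL, cins, p2, p1]
      have harg : (g (Fin.last n).castSucc * g (Fin.last (n + 1))) *
            ∏ k ∈ K, g k.castSucc.castSucc
          = g (Fin.last (n + 1)) * (g (Fin.last n).castSucc * ∏ k ∈ K, g k.castSucc.castSucc) := by
        ring
      rw [harg]
    have key3 : ∀ J : Finset (Fin (n + 1)),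
        (if J.Nonempty then
            (-1 : V) ^ (n + 1 - J.card) * D (∏ i ∈ J, g i.castSucc) * ∏ i ∈ Jᶜ, g i.castSucc
          else 0) * g (Fin.last (n + 1))
        = -(if (Finset.map (csEmb (n + 1)) J).Nonempty then
            (-1 : V) ^ (n + 1 + 1 - (Finset.map (csEmb (n + 1)) J).card) *
                D (∏ i ∈ Finset.map (csEmb (n + 1)) J, g i) *
              ∏ i ∈ (Finset.map (csEmb (n + 1)) J)ᶜ, g i
          else 0) := by
      intro J
      by_cases h : J.Nonempty
      · rw [if_pos h, if_pos (Finset.map_nonempty.mpr h), Finset.card_map,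
          p2 J g, c2 J, Finset.prod_insert (hnL Jᶜ), p2 Jᶜ g,
          show n + 1 + 1 - J.card = (n + 1 - J.card) + 1 from by have := cardJ J; omega,
          pow_succ]
        ring
      · rw [if_neg h, if_neg (by rwa [Finset.map_nonempty]), zero_mul, neg_zero]
    have key4 : ∀ K : Finset (Fin n),
        g (Fin.last n).castSucc *
          (if (insert (Fin.last n) (Finset.map (csEmb n) K)).Nonempty then
            (-1 : V) ^ (n + 1 - (insert (Fin.last n) (Finset.map (csEmb n) K)).card) *
                D (∏ i ∈ insert (Fin.last n) (Finset.map (csEmb n) K),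
                    (Fin.snoc (fun i : Fin n => g i.castSucc.castSucc)
                      (g (Fin.last (n + 1))) : Fin (n+1) → V) i) *
              ∏ i ∈ (insert (Fin.last n) (Finset.map (csEmb n) K))ᶜ,
                (Fin.snoc (fun i : Fin n => g i.castSucc.castSucc)
                  (g (Fin.last (n + 1))) : Fin (n+1) → V) i
          else 0)
        = -(if (insert (Fin.last (n + 1))
              (Finset.map (csEmb (n + 1)) (Finset.map (csEmb n) K))).Nonempty then
            (-1 : V) ^ (n + 1 + 1 - (insert (Fin.last (n + 1))
                (Finset.map (csEmb (n + 1)) (Finset.map (csEmb n) K))).card) *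
                D (∏ i ∈ insert (Fin.last (n + 1))
                    (Finset.map (csEmb (n + 1)) (Finset.map (csEmb n) K)), g i) *
              ∏ i ∈ (insert (Fin.last (n + 1))
                  (Finset.map (csEmb (n + 1)) (Finset.map (csEmb n) K)))ᶜ, g i
          else 0) := by
      intro K
      rw [if_pos (Finset.insert_nonempty _ _), if_pos (Finset.insert_nonempty _ _)]
      have hc1 : (insert (Fin.last n) (Finset.map (csEmb n) K)).card = K.card + 1 := by
        rw [Finset.card_insert_of_notMem (hnm1 K), Finset.card_map]
      have hc2 : (insert (Fin.last (n + 1))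
          (Finset.map (csEmb (n + 1)) (Finset.map (csEmb n) K))).card = K.card + 1 := by
        rw [Finset.card_insert_of_notMem (hnL _), Finset.card_map, Finset.card_map]
      rw [hc1, hc2, show n + 1 - (K.card + 1) = n - K.card from by omega,
        show n + 1 + 1 - (K.card + 1) = (n - K.card) + 1 from by have := cardK K; omega,
        pow_succ]
      -- LHS products
      rw [pins, cins, psnoc]
      -- RHS products
      rw [Finset.prod_insert (hnL _), p2, p1]
      -- RHS complement
      rw [cinsL, c1, Finset.map_insert, csEmb_apply,
        Finset.prod_insert (hmM Kᶜ), p2, p1]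
      ring
    -- assemble
    rw [Finset.sum_congr rfl fun K (_ : K ∈ (Finset.univ : Finset (Fin n)).powerset) => key1 K]
    rw [Finset.sum_congr rfl fun K (_ : K ∈ (Finset.univ : Finset (Fin n)).powerset) => key2 K]
    rw [Finset.sum_mul]
    rw [Finset.sum_congr rfl fun J (_ : J ∈ (Finset.univ : Finset (Fin (n + 1))).powerset) => key3 J]
    rw [Finset.sum_neg_distrib]
    rw [mul_add, Finset.mul_sum, Finset.mul_sum]
    rw [Finset.sum_congr rfl fun K (_ : K ∈ (Finset.univ : Finset (Fin n)).powerset) => key4 K]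
    rw [Finset.sum_neg_distrib]
    ring

/-- A linear map `D` is a differential operator of order at most `l` iff
`D(f₁⋯f_{l+1}) = Σ_{I ⊆ {1,…,l+1}, 1 ≤ |I| ≤ l} (−1)^{l−|I|} D(f_I) f_{Iᶜ}`. -/
theorem isDiffOp_iff_formula {V : Type*} [CommRing V] [Algebra ℂ V]
    (D : V →ₗ[ℂ] V) (l : ℕ) :
    IsDiffOpOfOrderAtMost (⇑D) l ↔
      ∀ f : Fin (l + 1) → V,
        D (∏ i, f i) =
          ∑ I ∈ Finset.univ.powerset.filter
              (fun I : Finset (Fin (l + 1)) => 1 ≤ I.card ∧ I.card ≤ l),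
            (-1 : V) ^ (l - I.card) * D (∏ i ∈ I, f i) * ∏ i ∈ Iᶜ, f i := by
  have key : ∀ f : Fin (l + 1) → V,
      koszul (⇑D) (l + 1) f =
        D (∏ i, f i) -
          ∑ I ∈ Finset.univ.powerset.filter
              (fun I : Finset (Fin (l + 1)) => 1 ≤ I.card ∧ I.card ≤ l),
            (-1 : V) ^ (l - I.card) * D (∏ i ∈ I, f i) * ∏ i ∈ Iᶜ, f i := by
    intro f
    rw [koszul_closed]
    have huniv_mem : (univ : Finset (Fin (l + 1))) ∈
        (univ : Finset (Fin (l + 1))).powerset.filter Finset.Nonempty := by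
      simp [Finset.univ_nonempty]
    rw [← Finset.add_sum_erase _ _ huniv_mem]
    have hset : ((univ : Finset (Fin (l + 1))).powerset.filter Finset.Nonempty).erase univ =
        Finset.univ.powerset.filter
          (fun I : Finset (Fin (l + 1)) => 1 ≤ I.card ∧ I.card ≤ l) := by
      ext I
      simp only [Finset.mem_erase, Finset.mem_filter, Finset.mem_powerset,
        Finset.subset_univ, true_and, Finset.one_le_card]
      constructor
      · rintro ⟨hne, hI⟩
        refine ⟨hI, ?_⟩
        have h1 : I.card ≤ l + 1 := by simpa using Finset.card_le_univ I
        have h2 : I.card ≠ l + 1 := by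
          intro h
          exact hne ((Finset.card_eq_iff_eq_univ I).mp (by simp [h]))
        omega
      · rintro ⟨hI, hle⟩
        refine ⟨?_, hI⟩
        intro h
        subst h
        simp [Fintype.card_fin] at hle
    rw [hset]
    have hfirst : (-1 : V) ^ (l + 1 - (univ : Finset (Fin (l + 1))).card) *
        D (∏ i ∈ (univ : Finset (Fin (l + 1))), f i) * ∏ i ∈ (univ : Finset (Fin (l + 1)))ᶜ, f i
        = D (∏ i, f i) := by
      simp [Finset.card_univ, Fintype.card_fin, Finset.compl_univ]
    rw [hfirst]
    rw [sub_eq_add_neg, ← Finset.sum_neg_distrib]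
    congr 1
    refine Finset.sum_congr rfl fun I hI => ?_
    simp only [Finset.mem_filter] at hI
    rw [show l + 1 - I.card = (l - I.card) + 1 from by omega, pow_succ]
    ring
  constructor
  · intro h f
    have := (key f).symm.trans (h f)
    have h2 : D (∏ i, f i) -
        ∑ I ∈ Finset.univ.powerset.filter
            (fun I : Finset (Fin (l + 1)) => 1 ≤ I.card ∧ I.card ≤ l),
          (-1 : V) ^ (l - I.card) * D (∏ i ∈ I, f i) * ∏ i ∈ Iᶜ, f i = 0 := this
    exact sub_eq_zero.mp h2
  · intro h f
    rw [key f, h f, sub_self]
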